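/- Let V be a finite index set, G a directed acyclic graph on V, and (X_v)_{v ∈ V} a family of random variables on a probability space, each taking values in a finite type, that satisfies the local Markov condition with respect to G. Then for every vertex v ∈ V and every subset S with PA_v ⊆ S ⊆ V \ {v} such that v is not an ancestor in G of any element of S, the conditional Shannon entropy satisfies H(X_v | (X_w)_{w ∈ S}) ≥ H(X_v | (X_w)_{w ∈ PA_v}); moreover this lower bound is attained (e.g. at S = PA_v), so that the minimum of H(X_v | (X_w)_{w ∈ S}) over all such sets S equals H(X_v | (X_w)_{w ∈ PA_v}). -/

import Mathlib

open MeasureTheory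

/-- Conditional Shannon entropy `H(X | Y)` of finitely-valued random variables:
`H(X | Y) = -∑_{x,y} P(X = x, Y = y) * log P(X = x | Y = y)`, with the convention
that terms with zero probability vanish (Lean's `log 0 = 0` and `a / 0 = 0`
conventions make this automatic). -/
noncomputable def condEntropy {Ω α β : Type*} [MeasurableSpace Ω] [Fintype α] [Fintype β]
    (μ : Measure Ω) (X : Ω → α) (Y : Ω → β) : ℝ :=
  -∑ x : α, ∑ y : β,
      (μ {ω | X ω = x ∧ Y ω = y}).toReal *
        Real.log ((μ {ω | X ω = x ∧ Y ω = y}).toReal / (μ {ω | Y ω = y}).toReal)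

/-- `X` and `W` are conditionally independent given `Z`:
for all values `x, w, z` with `P(Z = z) > 0`,
`P(X = x, W = w | Z = z) = P(X = x | Z = z) * P(W = w | Z = z)`. -/
def CondIndepFun {Ω α β γ : Type*} [MeasurableSpace Ω]
    (μ : Measure Ω) (X : Ω → α) (W : Ω → β) (Z : Ω → γ) : Prop :=
  ∀ (x : α) (w : β) (z : γ), 0 < (μ {ω | Z ω = z}).toReal →
    (μ {ω | X ω = x ∧ W ω = w ∧ Z ω = z}).toReal / (μ {ω | Z ω = z}).toReal =
      ((μ {ω | X ω = x ∧ Z ω = z}).toReal / (μ {ω | Z ω = z}).toReal) *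
        ((μ {ω | W ω = w ∧ Z ω = z}).toReal / (μ {ω | Z ω = z}).toReal)

/-!
The local Markov condition at `v` makes `X v` conditionally independent of its non-parent
non-descendants given its parents `PA v`. An admissible `S` consists of parents and non-parent
non-descendants only, so `X_S` is a function of (non-descendants, parents) and determines `X_{PA v}`.
Hence `P(X v = x | X_S) = P(X v = x | X_{PA v})` wherever the left side is defined, and the two
conditional entropies are equal for every admissible `S`, in particular for `S = PA v`.
-/

theorem measurableSet_pi_eq {Ω : Type*} [MeasurableSpace Ω] {ι : Type*} [Countable ι] {β : ι → Type*} (Y : ∀ i, Ω → β i)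
    (hY : ∀ i b, MeasurableSet {ω | Y i ω = b}) (y : ∀ i, β i) :
    MeasurableSet {ω | (fun i => Y i ω) = y} := by
  simp only [funext_iff, Set.ofPred_forall]
  exact MeasurableSet.iInter fun i => hY i (y i)

section FiniteMeasure

variable {Ω : Type*} [MeasurableSpace Ω] {μ : Measure Ω} [IsFiniteMeasure μ]

theorem measureReal_setOf_mem_and {κ : Type*} (T : Ω → κ) (t : Finset κ) (Q : Ω → Prop)
    (hmeas : ∀ k ∈ t, MeasurableSet {ω | T ω = k ∧ Q ω}) :
    μ.real {ω | T ω ∈ t ∧ Q ω} = ∑ k ∈ t, μ.real {ω | T ω = k ∧ Q ω} := by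
  have hunion : {ω | T ω ∈ t ∧ Q ω} = ⋃ k ∈ t, {ω | T ω = k ∧ Q ω} := by
    ext ω
    simp
  rw [hunion, measureReal_biUnion_finset _ hmeas]
  intro k _ l _ hkl
  exact Set.disjoint_left.mpr fun ω hk hl => hkl (hk.1.symm.trans hl.1)

variable {α β γ δ : Type*}

theorem CondIndepFun.measureReal_mul {X : Ω → α} {W : Ω → δ} {Z : Ω → γ}
    (h : CondIndepFun μ X W Z) (x : α) (w : δ) (z : γ) :
    μ.real {ω | X ω = x ∧ W ω = w ∧ Z ω = z} * μ.real {ω | Z ω = z} =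
      μ.real {ω | X ω = x ∧ Z ω = z} * μ.real {ω | W ω = w ∧ Z ω = z} := by
  rcases (measureReal_nonneg (μ := μ) (s := {ω | Z ω = z})).eq_or_lt with hz | hz
  · have hxz : μ.real {ω | X ω = x ∧ Z ω = z} = 0 :=
      le_antisymm (hz ▸ measureReal_mono fun ω h => h.2) measureReal_nonneg
    rw [← hz, hxz, mul_zero, zero_mul]
  · have hind := h x w z hz
    simp only [← measureReal_def] at hind
    field_simp [hz.ne'] at hind
    linear_combination hind

theorem measureReal_mul_eq_of_condIndepFun [Fintype δ] {X : Ω → α} {W : Ω → δ} {Y : Ω → β}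
    {Z : Ω → γ} (f : β → γ) (g : δ → γ → β) (hZY : ∀ ω, Z ω = f (Y ω))
    (hYWZ : ∀ ω, Y ω = g (W ω) (Z ω)) (hX : ∀ x, MeasurableSet {ω | X ω = x})
    (hW : ∀ w, MeasurableSet {ω | W ω = w}) (hZ : ∀ z, MeasurableSet {ω | Z ω = z})
    (hind : CondIndepFun μ X W Z) (x : α) (y : β) :
    μ.real {ω | X ω = x ∧ Y ω = y} * μ.real {ω | Z ω = f y} =
      μ.real {ω | X ω = x ∧ Z ω = f y} * μ.real {ω | Y ω = y} := by
  classical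
  set A := Finset.univ.filter fun w => g w (f y) = y
  have hsplit : ∀ Q : Ω → Prop, MeasurableSet {ω | Q ω} → μ.real {ω | Q ω ∧ Y ω = y} =
      ∑ w ∈ A, μ.real {ω | W ω = w ∧ Q ω ∧ Z ω = f y} := by
    intro Q hQ
    have hset : {ω | Q ω ∧ Y ω = y} = {ω | W ω ∈ A ∧ Q ω ∧ Z ω = f y} := by
      ext ω
      simp only [Set.mem_ofPred_eq, A, Finset.mem_filter, Finset.mem_univ, true_and]
      constructor
      · rintro ⟨hq, rfl⟩
        exact ⟨by rw [← hZY, ← hYWZ], hq, hZY ω⟩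
      · rintro ⟨hg, hq, hz⟩
        exact ⟨hq, by rw [hYWZ, hz, hg]⟩
    rw [hset, measureReal_setOf_mem_and W A (fun ω => Q ω ∧ Z ω = f y)
      fun w _ => (hW w).inter (hQ.inter (hZ (f y)))]
  have hxy := hsplit (X · = x) (hX x)
  have hy : μ.real {ω | Y ω = y} = ∑ w ∈ A, μ.real {ω | W ω = w ∧ Z ω = f y} := by
    simpa only [true_and] using hsplit (fun _ => True) MeasurableSet.univ
  simp only [hxy, hy, Finset.sum_mul, Finset.mul_sum]
  refine Finset.sum_congr rfl fun w _ => ?_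
  rw [← hind.measureReal_mul]
  simp only [and_left_comm]

variable [Fintype α] [Fintype β] [Fintype γ]

theorem condEntropy_eq_of_measureReal_mul_eq {X : Ω → α} {Y : Ω → β} {Z : Ω → γ} (f : β → γ)
    (hZY : ∀ ω, Z ω = f (Y ω)) (hX : ∀ x, MeasurableSet {ω | X ω = x})
    (hY : ∀ y, MeasurableSet {ω | Y ω = y})
    (hmul : ∀ x y, μ.real {ω | X ω = x ∧ Y ω = y} * μ.real {ω | Z ω = f y} =
      μ.real {ω | X ω = x ∧ Z ω = f y} * μ.real {ω | Y ω = y}) :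
    condEntropy μ X Y = condEntropy μ X Z := by
  classical
  have hcond : ∀ x y, μ.real {ω | X ω = x ∧ Y ω = y} ≠ 0 →
      μ.real {ω | X ω = x ∧ Y ω = y} / μ.real {ω | Y ω = y} =
        μ.real {ω | X ω = x ∧ Z ω = f y} / μ.real {ω | Z ω = f y} := by
    intro x y hxy
    have hpos := measureReal_nonneg.lt_of_ne' hxy
    have hy : 0 < μ.real {ω | Y ω = y} := hpos.trans_le (measureReal_mono fun ω h => h.2)
    have hz : 0 < μ.real {ω | Z ω = f y} :=
      hpos.trans_le (measureReal_mono fun ω h => (hZY ω).trans (congrArg f h.2))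
    rw [div_eq_div_iff hy.ne' hz.ne']
    exact hmul x y
  have hfiber : ∀ x z, μ.real {ω | X ω = x ∧ Z ω = z} =
      ∑ y ∈ Finset.univ.filter (f · = z), μ.real {ω | X ω = x ∧ Y ω = y} := by
    intro x z
    have hset :
        {ω | X ω = x ∧ Z ω = z} = {ω | Y ω ∈ Finset.univ.filter (f · = z) ∧ X ω = x} := by
      ext ω
      simp [hZY, and_comm]
    rw [hset, measureReal_setOf_mem_and Y _ (X · = x) fun y _ => (hY y).inter (hX x)]
    simp only [and_comm]
  simp only [condEntropy, ← measureReal_def, neg_inj]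
  refine Finset.sum_congr rfl fun x _ => ?_
  calc ∑ y, μ.real {ω | X ω = x ∧ Y ω = y} *
          Real.log (μ.real {ω | X ω = x ∧ Y ω = y} / μ.real {ω | Y ω = y})
      = ∑ y, μ.real {ω | X ω = x ∧ Y ω = y} *
          Real.log (μ.real {ω | X ω = x ∧ Z ω = f y} / μ.real {ω | Z ω = f y}) := by
        refine Finset.sum_congr rfl fun y _ => ?_
        rcases eq_or_ne (μ.real {ω | X ω = x ∧ Y ω = y}) 0 with h | h
        · rw [h, zero_mul, zero_mul]
        · rw [hcond x y h]
    _ = ∑ z, ∑ y ∈ Finset.univ.filter (f · = z), μ.real {ω | X ω = x ∧ Y ω = y} *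
          Real.log (μ.real {ω | X ω = x ∧ Z ω = z} / μ.real {ω | Z ω = z}) := by
        rw [← Finset.sum_fiberwise Finset.univ f]
        refine Finset.sum_congr rfl fun z _ => Finset.sum_congr rfl fun y hy => ?_
        rw [(Finset.mem_filter.mp hy).2]
    _ = ∑ z, μ.real {ω | X ω = x ∧ Z ω = z} *
          Real.log (μ.real {ω | X ω = x ∧ Z ω = z} / μ.real {ω | Z ω = z}) := by
        simp only [← Finset.sum_mul, hfiber]

theorem condEntropy_eq_of_condIndepFun [Fintype δ] {X : Ω → α} {W : Ω → δ} {Y : Ω → β}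
    {Z : Ω → γ} (f : β → γ) (g : δ → γ → β) (hZY : ∀ ω, Z ω = f (Y ω))
    (hYWZ : ∀ ω, Y ω = g (W ω) (Z ω)) (hX : ∀ x, MeasurableSet {ω | X ω = x})
    (hY : ∀ y, MeasurableSet {ω | Y ω = y}) (hW : ∀ w, MeasurableSet {ω | W ω = w})
    (hZ : ∀ z, MeasurableSet {ω | Z ω = z}) (hind : CondIndepFun μ X W Z) :
    condEntropy μ X Y = condEntropy μ X Z :=
  condEntropy_eq_of_measureReal_mul_eq f hZY hX hY
    (measureReal_mul_eq_of_condIndepFun f g hZY hYWZ hX hW hZ hind)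

end FiniteMeasure

theorem condEntropy_eq_condEntropy_parents {Ω : Type*} [MeasurableSpace Ω] {μ : Measure Ω}
    [IsFiniteMeasure μ] {V : Type*} [Fintype V] [DecidableEq V] (G : V → V → Prop)
    [DecidableRel G] {α : V → Type*} [∀ v, Fintype (α v)] (X : ∀ v, Ω → α v)
    (hXmeas : ∀ v (x : α v), MeasurableSet {ω | X v ω = x}) {v : V}
    (hMarkov : CondIndepFun μ (X v)
        (fun ω => fun u : {u : V // u ≠ v ∧ ¬ Relation.TransGen G v u ∧ ¬ G u v} => X u.1 ω)
        (fun ω => fun u : {u : V // G u v} => X u.1 ω))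
    {S : Finset V} (hPA : ∀ u, G u v → u ∈ S) (hvS : v ∉ S)
    (hND : ∀ u ∈ S, ¬ Relation.TransGen G v u) :
    condEntropy μ (X v) (fun ω => fun u : S => X u.1 ω) =
      condEntropy μ (X v) (fun ω => fun u : {u : V // G u v} => X u.1 ω) := by
  classical
  exact condEntropy_eq_of_condIndepFun (fun y u => y ⟨u.1, hPA u.1 u.2⟩)
    (fun w z u => if h : G u.1 v then z ⟨u.1, h⟩
      else w ⟨u.1, fun e => hvS (e ▸ u.2), hND u.1 u.2, h⟩)
    (fun _ => rfl) (fun ω => funext fun u => by split_ifs <;> rfl) (hXmeas v)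
    (measurableSet_pi_eq _ fun u => hXmeas u.1) (measurableSet_pi_eq _ fun u => hXmeas u.1)
    (measurableSet_pi_eq _ fun u => hXmeas u.1) hMarkov

theorem condEntropy_parents_is_min_general
    {Ω : Type*} [MeasurableSpace Ω] (μ : Measure Ω) [IsProbabilityMeasure μ]
    {V : Type*} [Fintype V] [DecidableEq V]
    (G : V → V → Prop) [DecidableRel G]
    (hacyclic : ∀ v, ¬ Relation.TransGen G v v)
    {α : V → Type*} [∀ v, Fintype (α v)]
    (X : ∀ v, Ω → α v)
    (hXmeas : ∀ v (x : α v), MeasurableSet {ω | X v ω = x})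
    (hMarkov : ∀ v : V,
      CondIndepFun μ (X v)
        (fun ω => fun u : {u : V // u ≠ v ∧ ¬ Relation.TransGen G v u ∧ ¬ G u v} =>
          X u.1 ω)
        (fun ω => fun u : {u : V // G u v} => X u.1 ω))
    (v : V) :
    (∀ S : Finset V,
        (∀ u, G u v → u ∈ S) → v ∉ S → (∀ u ∈ S, ¬ Relation.TransGen G v u) →
        condEntropy μ (X v) (fun ω => fun u : {u : V // G u v} => X u.1 ω) ≤
          condEntropy μ (X v) (fun ω => fun u : S => X u.1 ω)) ∧
      (∃ S : Finset V,
        (∀ u, G u v → u ∈ S) ∧ v ∉ S ∧ (∀ u ∈ S, ¬ Relation.TransGen G v u) ∧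
        condEntropy μ (X v) (fun ω => fun u : S => X u.1 ω) =
          condEntropy μ (X v) (fun ω => fun u : {u : V // G u v} => X u.1 ω)) := by
  set PA := Finset.univ.filter (G · v)
  have hPA : ∀ u, G u v → u ∈ PA := fun u h => Finset.mem_filter.mpr ⟨Finset.mem_univ u, h⟩
  have hvPA : v ∉ PA := fun h => hacyclic v (.single (Finset.mem_filter.mp h).2)
  have hPA_ND : ∀ u ∈ PA, ¬ Relation.TransGen G v u :=
    fun u hu hvu => hacyclic v (hvu.tail (Finset.mem_filter.mp hu).2)
  exact ⟨fun S hS_PA hvS hS_ND =>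
      (condEntropy_eq_condEntropy_parents G X hXmeas (hMarkov v) hS_PA hvS hS_ND).ge,
    PA, hPA, hvPA, hPA_ND,
    condEntropy_eq_condEntropy_parents G X hXmeas (hMarkov v) hPA hvPA hPA_ND⟩

/-- Let `G` be a DAG on a finite vertex set `V` (irreflexive edge
relation with irreflexive transitive closure) and `(X v)_{v ∈ V}` a family of
finitely-valued random variables satisfying the local Markov condition: each `X v`
is conditionally independent of the family indexed by the non-descendants of `v`
other than its parents, given the family indexed by the parents `PA v = {u | G u v}`.
Then for every `v`, over all sets `S` with `PA v ⊆ S ⊆ V \ {v}` such that `v` is not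
an ancestor of any element of `S`, the conditional entropy `H(X v | (X w)_{w ∈ S})`
is bounded below by `H(X v | (X w)_{w ∈ PA v})`, and this lower bound is attained by
some such `S` (e.g. `S = PA v`); hence the minimum over all such `S` equals
`H(X v | (X w)_{w ∈ PA v})`. -/
theorem condEntropy_parents_is_min
    {Ω : Type*} [MeasurableSpace Ω] (μ : Measure Ω) [IsProbabilityMeasure μ]
    {V : Type*} [Fintype V] [DecidableEq V]
    (G : V → V → Prop) [DecidableRel G]
    (hirrefl : ∀ v, ¬ G v v)
    (hacyclic : ∀ v, ¬ Relation.TransGen G v v)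
    {α : V → Type*} [∀ v, Fintype (α v)]
    (X : ∀ v, Ω → α v)
    (hXmeas : ∀ v (x : α v), MeasurableSet {ω | X v ω = x})
    (hMarkov : ∀ v : V,
      CondIndepFun μ (X v)
        (fun ω => fun u : {u : V // u ≠ v ∧ ¬ Relation.TransGen G v u ∧ ¬ G u v} =>
          X u.1 ω)
        (fun ω => fun u : {u : V // G u v} => X u.1 ω))
    (v : V) :
    (∀ S : Finset V,
        (∀ u, G u v → u ∈ S) → v ∉ S → (∀ u ∈ S, ¬ Relation.TransGen G v u) →
        condEntropy μ (X v) (fun ω => fun u : {u : V // G u v} => X u.1 ω) ≤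
          condEntropy μ (X v) (fun ω => fun u : S => X u.1 ω)) ∧
      (∃ S : Finset V,
        (∀ u, G u v → u ∈ S) ∧ v ∉ S ∧ (∀ u ∈ S, ¬ Relation.TransGen G v u) ∧
        condEntropy μ (X v) (fun ω => fun u : S => X u.1 ω) =
          condEntropy μ (X v) (fun ω => fun u : {u : V // G u v} => X u.1 ω)) :=
  condEntropy_parents_is_min_general μ G hacyclic X hXmeas hMarkov v
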